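/- Let M > 0, and for r > 2M set μ = 1 − 2M/r, Δ = r² − 2Mr, Y = μ^{−1}∂_t − ∂_r, V̂ = μ^{−1}∂_t + ∂_r. Suppose Φ₊(t, r, θ, φ) and Φ₋(t, r, θ, φ) are smooth complex scalars of spin-weights +1/2 and −1/2 respectively, compactly supported in θ inside (0,π) and 2π-periodic in φ, satisfying the first-order system ð' Φ₊ = Δ^{1/2} V̂ Φ₋ and ð Φ₋ = Δ^{1/2} Y Φ₊, where ð and ð' are the spin-weighted edth operators. Then for every (t, r): ∫_{S²} [ V̂(|Φ₋|²) + Y(|Φ₊|²) ] sin θ dθ dφ = 0. -/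

import Mathlib

section DiracHelpers

lemma HasDerivAt.cre {f : ℝ → ℂ} {f' : ℂ} {x : ℝ} (h : HasDerivAt f f' x) :
    HasDerivAt (fun y => (f y).re) f'.re x :=
  Complex.reCLM.hasFDerivAt.comp_hasDerivAt x h

lemma HasDerivAt.cim {f : ℝ → ℂ} {f' : ℂ} {x : ℝ} (h : HasDerivAt f f' x) :
    HasDerivAt (fun y => (f y).im) f'.im x :=
  Complex.imCLM.hasFDerivAt.comp_hasDerivAt x h

lemma hasDerivAt_normSq_comp {f : ℝ → ℂ} {f' : ℂ} {x : ℝ} (h : HasDerivAt f f' x) :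
    HasDerivAt (fun y => ‖f y‖ ^ 2) (2 * ((f x).re * f'.re + (f x).im * f'.im)) x := by
  have h1 := (h.cre.mul h.cre).add (h.cim.mul h.cim)
  have heq : (fun y => ‖f y‖ ^ 2) = fun y => (f y).re * (f y).re + (f y).im * (f y).im := by
    funext y
    rw [Complex.sq_norm, Complex.normSq_apply]
  rw [heq]
  refine h1.congr_deriv ?_
  ring

lemma hasDerivAt_partial_fst {G : ℝ × ℝ → ℝ} (hG : Differentiable ℝ G) (x y : ℝ) :
    HasDerivAt (fun x' => G (x', y)) (fderiv ℝ G (x, y) ((1 : ℝ), (0 : ℝ))) x :=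
  (hG (x, y)).hasFDerivAt.comp_hasDerivAt x ((hasDerivAt_id x).prodMk (hasDerivAt_const x y))

lemma hasDerivAt_partial_snd {G : ℝ × ℝ → ℝ} (hG : Differentiable ℝ G) (x y : ℝ) :
    HasDerivAt (fun y' => G (x, y')) (fderiv ℝ G (x, y) ((0 : ℝ), (1 : ℝ))) y :=
  (hG (x, y)).hasFDerivAt.comp_hasDerivAt y ((hasDerivAt_const y x).prodMk (hasDerivAt_id y))

lemma swap_cont {f : ℝ → ℝ → ℝ} (hf : Continuous (Function.uncurry f)) {a b c d : ℝ}
    (hab : a ≤ b) (hcd : c ≤ d) :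
    ∫ x in a..b, ∫ y in c..d, f x y = ∫ y in c..d, ∫ x in a..b, f x y := by
  have hint : MeasureTheory.Integrable (Function.uncurry f)
      ((MeasureTheory.volume.restrict (Set.Ioc a b)).prod
        (MeasureTheory.volume.restrict (Set.Ioc c d))) := by
    rw [MeasureTheory.Measure.prod_restrict]
    exact MeasureTheory.IntegrableOn.mono_set
      (hf.continuousOn.integrableOn_compact (isCompact_Icc.prod isCompact_Icc))
      (Set.prod_mono Set.Ioc_subset_Icc_self Set.Ioc_subset_Icc_self)
  rw [intervalIntegral.integral_of_le hab, intervalIntegral.integral_of_le hcd]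
  simp_rw [intervalIntegral.integral_of_le hcd, intervalIntegral.integral_of_le hab]
  exact MeasureTheory.integral_integral_swap hint

lemma slice_t {Φ : ℝ → ℝ → ℝ → ℝ → ℂ}
    (h : ContDiff ℝ (⊤ : ℕ∞) (fun x : ℝ × ℝ × ℝ × ℝ => Φ x.1 x.2.1 x.2.2.1 x.2.2.2)) (t r θ φ : ℝ) :
    HasDerivAt (fun t' => Φ t' r θ φ) (deriv (fun t' => Φ t' r θ φ) t) t := by
  have hd : Differentiable ℝ ((fun x : ℝ × ℝ × ℝ × ℝ => Φ x.1 x.2.1 x.2.2.1 x.2.2.2) ∘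
      (fun t' : ℝ => ((t', r, θ, φ) : ℝ × ℝ × ℝ × ℝ))) :=
    (h.differentiable (by simp)).comp (by fun_prop)
  exact (hd t).hasDerivAt

lemma slice_r {Φ : ℝ → ℝ → ℝ → ℝ → ℂ}
    (h : ContDiff ℝ (⊤ : ℕ∞) (fun x : ℝ × ℝ × ℝ × ℝ => Φ x.1 x.2.1 x.2.2.1 x.2.2.2)) (t r θ φ : ℝ) :
    HasDerivAt (fun r' => Φ t r' θ φ) (deriv (fun r' => Φ t r' θ φ) r) r := by
  have hd : Differentiable ℝ ((fun x : ℝ × ℝ × ℝ × ℝ => Φ x.1 x.2.1 x.2.2.1 x.2.2.2) ∘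
      (fun r' : ℝ => ((t, r', θ, φ) : ℝ × ℝ × ℝ × ℝ))) :=
    (h.differentiable (by simp)).comp (by fun_prop)
  exact (hd r).hasDerivAt

lemma slice_θ {Φ : ℝ → ℝ → ℝ → ℝ → ℂ}
    (h : ContDiff ℝ (⊤ : ℕ∞) (fun x : ℝ × ℝ × ℝ × ℝ => Φ x.1 x.2.1 x.2.2.1 x.2.2.2)) (t r θ φ : ℝ) :
    HasDerivAt (fun x => Φ t r x φ) (deriv (fun x => Φ t r x φ) θ) θ := by
  have hd : Differentiable ℝ ((fun x : ℝ × ℝ × ℝ × ℝ => Φ x.1 x.2.1 x.2.2.1 x.2.2.2) ∘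
      (fun x : ℝ => ((t, r, x, φ) : ℝ × ℝ × ℝ × ℝ))) :=
    (h.differentiable (by simp)).comp (by fun_prop)
  exact (hd θ).hasDerivAt

lemma slice_φ {Φ : ℝ → ℝ → ℝ → ℝ → ℂ}
    (h : ContDiff ℝ (⊤ : ℕ∞) (fun x : ℝ × ℝ × ℝ × ℝ => Φ x.1 x.2.1 x.2.2.1 x.2.2.2)) (t r θ φ : ℝ) :
    HasDerivAt (fun y => Φ t r θ y) (deriv (fun y => Φ t r θ y) φ) φ := by
  have hd : Differentiable ℝ ((fun x : ℝ × ℝ × ℝ × ℝ => Φ x.1 x.2.1 x.2.2.1 x.2.2.2) ∘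
      (fun y : ℝ => ((t, r, θ, y) : ℝ × ℝ × ℝ × ℝ))) :=
    (h.differentiable (by simp)).comp (by fun_prop)
  exact (hd φ).hasDerivAt

lemma slice2_contDiff {Φ : ℝ → ℝ → ℝ → ℝ → ℂ}
    (h : ContDiff ℝ (⊤ : ℕ∞) (fun x : ℝ × ℝ × ℝ × ℝ => Φ x.1 x.2.1 x.2.2.1 x.2.2.2)) (t r : ℝ) :
    ContDiff ℝ (⊤ : ℕ∞) (fun p : ℝ × ℝ => Φ t r p.1 p.2) :=
  h.comp (by fun_prop : ContDiff ℝ (⊤ : ℕ∞) (fun p : ℝ × ℝ => ((t, r, p.1, p.2) : ℝ × ℝ × ℝ × ℝ)))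

lemma pointwise_alg (sq m s co cc : ℝ) (hsq : sq ≠ 0) (hs : s ≠ 0) (hcc : cc = 2 / sq)
    (P0 Q0 Pt Pr Pth Pph Qt Qr Qth Qph : ℂ)
    (hE1 : Pth - Complex.I * ((s : ℂ))⁻¹ * Pph + ((1 / 2 : ℝ) : ℂ) * ((co / s : ℝ) : ℂ) * P0
         = (sq : ℂ) * (((m : ℝ) : ℂ)⁻¹ * Qt + Qr))
    (hE2 : Qth + Complex.I * ((s : ℂ))⁻¹ * Qph - ((-(1 / 2) : ℝ) : ℂ) * ((co / s : ℝ) : ℂ) * Q0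
         = (sq : ℂ) * (((m : ℝ) : ℂ)⁻¹ * Pt - Pr)) :
    ((m⁻¹ * (2 * (Q0.re * Qt.re + Q0.im * Qt.im)) + 2 * (Q0.re * Qr.re + Q0.im * Qr.im))
      + (m⁻¹ * (2 * (P0.re * Pt.re + P0.im * Pt.im)) - 2 * (P0.re * Pr.re + P0.im * Pr.im))) * s
    = (cc * ((Qth.re * P0.re + Q0.re * Pth.re) + (Qth.im * P0.im + Q0.im * Pth.im)) * s
        + cc * (Q0.re * P0.re + Q0.im * P0.im) * co)
      + cc * ((Qph.re * P0.im + Q0.re * Pph.im) - (Qph.im * P0.re + Q0.im * Pph.re)) := by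
  subst hcc
  have hsqC : (sq : ℂ) ≠ 0 := Complex.ofReal_ne_zero.mpr hsq
  have h1 : ((m : ℝ) : ℂ)⁻¹ * Qt + Qr
      = (sq : ℂ)⁻¹ * (Pth - Complex.I * ((s : ℂ))⁻¹ * Pph
          + ((1 / 2 : ℝ) : ℂ) * ((co / s : ℝ) : ℂ) * P0) := by
    rw [hE1, inv_mul_cancel_left₀ hsqC]
  have h2 : ((m : ℝ) : ℂ)⁻¹ * Pt - Pr
      = (sq : ℂ)⁻¹ * (Qth + Complex.I * ((s : ℂ))⁻¹ * Qph
          - ((-(1 / 2) : ℝ) : ℂ) * ((co / s : ℝ) : ℂ) * Q0) := by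
    rw [hE2, inv_mul_cancel_left₀ hsqC]
  have l1 : m⁻¹ * (2 * (Q0.re * Qt.re + Q0.im * Qt.im)) + 2 * (Q0.re * Qr.re + Q0.im * Qr.im)
      = 2 * (Q0.re * (((m : ℝ) : ℂ)⁻¹ * Qt + Qr).re + Q0.im * (((m : ℝ) : ℂ)⁻¹ * Qt + Qr).im) := by
    simp only [← Complex.ofReal_inv, Complex.add_re, Complex.add_im, Complex.mul_re,
      Complex.mul_im, Complex.ofReal_re, Complex.ofReal_im]
    ring
  have l2 : m⁻¹ * (2 * (P0.re * Pt.re + P0.im * Pt.im)) - 2 * (P0.re * Pr.re + P0.im * Pr.im)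
      = 2 * (P0.re * (((m : ℝ) : ℂ)⁻¹ * Pt - Pr).re + P0.im * (((m : ℝ) : ℂ)⁻¹ * Pt - Pr).im) := by
    simp only [← Complex.ofReal_inv, Complex.sub_re, Complex.sub_im, Complex.mul_re,
      Complex.mul_im, Complex.ofReal_re, Complex.ofReal_im]
    ring
  rw [l1, l2, h1, h2]
  simp only [← Complex.ofReal_inv, Complex.mul_re, Complex.mul_im, Complex.add_re, Complex.add_im,
    Complex.sub_re, Complex.sub_im, Complex.I_re, Complex.I_im, Complex.ofReal_re,
    Complex.ofReal_im, Complex.ofReal_neg, Complex.neg_re, Complex.neg_im]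
  field_simp
  ring

end DiracHelpers


/-- The edth operator `ð` with spin weight `s`, acting in the angular variables `(θ, φ)`
of a scalar `g(t, r, θ, φ)`: `ð g = ∂_θ g + i (csc θ) ∂_φ g − s (cot θ) g`. -/
noncomputable def edth4 (s : ℝ) (g : ℝ → ℝ → ℝ → ℝ → ℂ) : ℝ → ℝ → ℝ → ℝ → ℂ :=
  fun t r θ φ =>
    deriv (fun x => g t r x φ) θ + Complex.I * ((Real.sin θ : ℂ))⁻¹ * deriv (fun y => g t r θ y) φ
      - (s : ℂ) * ((Real.cos θ / Real.sin θ : ℝ) : ℂ) * g t r θ φ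

/-- The edth operator `ð'` with spin weight `s`, acting in the angular variables `(θ, φ)`
of a scalar `g(t, r, θ, φ)`: `ð' g = ∂_θ g − i (csc θ) ∂_φ g + s (cot θ) g`. -/
noncomputable def edth4' (s : ℝ) (g : ℝ → ℝ → ℝ → ℝ → ℂ) : ℝ → ℝ → ℝ → ℝ → ℂ :=
  fun t r θ φ =>
    deriv (fun x => g t r x φ) θ - Complex.I * ((Real.sin θ : ℂ))⁻¹ * deriv (fun y => g t r θ y) φ
      + (s : ℂ) * ((Real.cos θ / Real.sin θ : ℝ) : ℂ) * g t r θ φ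

/-- The operator `Δ^{1/2} V̂ = Δ^{1/2}(μ^{−1}∂_t + ∂_r)` on Schwarzschild of mass `M`,
acting in the `(t, r)` variables, with `μ = 1 − 2M/r`, `Δ = r² − 2Mr`. -/
noncomputable def opDeltaV (M : ℝ) (g : ℝ → ℝ → ℝ → ℝ → ℂ) : ℝ → ℝ → ℝ → ℝ → ℂ :=
  fun t r θ φ =>
    (Real.sqrt (r ^ 2 - 2 * M * r) : ℂ) *
      (((1 - 2 * M / r : ℝ) : ℂ)⁻¹ * deriv (fun t' => g t' r θ φ) t
        + deriv (fun r' => g t r' θ φ) r)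

/-- The operator `Δ^{1/2} Y = Δ^{1/2}(μ^{−1}∂_t − ∂_r)` on Schwarzschild of mass `M`. -/
noncomputable def opDeltaY (M : ℝ) (g : ℝ → ℝ → ℝ → ℝ → ℂ) : ℝ → ℝ → ℝ → ℝ → ℂ :=
  fun t r θ φ =>
    (Real.sqrt (r ^ 2 - 2 * M * r) : ℂ) *
      (((1 - 2 * M / r : ℝ) : ℂ)⁻¹ * deriv (fun t' => g t' r θ φ) t
        - deriv (fun r' => g t r' θ φ) r)

/-- Conservation law for the massless Dirac field on Schwarzschild: if the spin `±1/2`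
components `Φ₊, Φ₋` (smooth, compactly supported in `θ` inside `(0, π)`, `2π`-periodic
in `φ`) satisfy the first-order system `ð' Φ₊ = Δ^{1/2} V̂ Φ₋`, `ð Φ₋ = Δ^{1/2} Y Φ₊`,
then for every `t` and `r > 2M`,
`∫_{S²} [ V̂(|Φ₋|²) + Y(|Φ₊|²) ] sin θ dθ dφ = 0`. -/
theorem dirac_conservation_law (M : ℝ) (hM : 0 < M)
    (Φp Φm : ℝ → ℝ → ℝ → ℝ → ℂ)
    (hp : ContDiff ℝ (⊤ : ℕ∞) (fun x : ℝ × ℝ × ℝ × ℝ => Φp x.1 x.2.1 x.2.2.1 x.2.2.2))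
    (hm : ContDiff ℝ (⊤ : ℕ∞) (fun x : ℝ × ℝ × ℝ × ℝ => Φm x.1 x.2.1 x.2.2.1 x.2.2.2))
    (hper_p : ∀ t r θ φ, Φp t r θ (φ + 2 * Real.pi) = Φp t r θ φ)
    (hper_m : ∀ t r θ φ, Φm t r θ (φ + 2 * Real.pi) = Φm t r θ φ)
    (hsupp : ∃ a b : ℝ, 0 < a ∧ a ≤ b ∧ b < Real.pi ∧
      ∀ t r θ φ, θ ∉ Set.Icc a b → Φp t r θ φ = 0 ∧ Φm t r θ φ = 0)
    (heq1 : ∀ t r θ φ, 2 * M < r → θ ∈ Set.Ioo 0 Real.pi →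
      edth4' (1 / 2) Φp t r θ φ = opDeltaV M Φm t r θ φ)
    (heq2 : ∀ t r θ φ, 2 * M < r → θ ∈ Set.Ioo 0 Real.pi →
      edth4 (-(1 / 2)) Φm t r θ φ = opDeltaY M Φp t r θ φ) :
    ∀ t r : ℝ, 2 * M < r →
      (∫ θ in (0 : ℝ)..Real.pi, (∫ φ in (0 : ℝ)..(2 * Real.pi),
          (((1 - 2 * M / r)⁻¹ * deriv (fun t' => ‖Φm t' r θ φ‖ ^ 2) t
              + deriv (fun r' => ‖Φm t r' θ φ‖ ^ 2) r)
            + ((1 - 2 * M / r)⁻¹ * deriv (fun t' => ‖Φp t' r θ φ‖ ^ 2) t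
              - deriv (fun r' => ‖Φp t r' θ φ‖ ^ 2) r))) * Real.sin θ) = 0 := by
  intro t r hr
  obtain ⟨a, b, ha, hab, hbpi, hz⟩ := hsupp
  have hπ : (0 : ℝ) < Real.pi := Real.pi_pos
  have h2π : (0 : ℝ) ≤ 2 * Real.pi := by positivity
  have hΔ : 0 < r ^ 2 - 2 * M * r := by nlinarith
  have hsq : 0 < Real.sqrt (r ^ 2 - 2 * M * r) := Real.sqrt_pos.mpr hΔ
  have hPu : ContDiff ℝ (⊤ : ℕ∞) (fun p : ℝ × ℝ => Φp t r p.1 p.2) := slice2_contDiff hp t r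
  have hQu : ContDiff ℝ (⊤ : ℕ∞) (fun p : ℝ × ℝ => Φm t r p.1 p.2) := slice2_contDiff hm t r
  have hrePu : ContDiff ℝ (⊤ : ℕ∞) (fun p : ℝ × ℝ => (Φp t r p.1 p.2).re) :=
    Complex.reCLM.contDiff.comp hPu
  have himPu : ContDiff ℝ (⊤ : ℕ∞) (fun p : ℝ × ℝ => (Φp t r p.1 p.2).im) :=
    Complex.imCLM.contDiff.comp hPu
  have hreQu : ContDiff ℝ (⊤ : ℕ∞) (fun p : ℝ × ℝ => (Φm t r p.1 p.2).re) :=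
    Complex.reCLM.contDiff.comp hQu
  have himQu : ContDiff ℝ (⊤ : ℕ∞) (fun p : ℝ × ℝ => (Φm t r p.1 p.2).im) :=
    Complex.imCLM.contDiff.comp hQu
  set Gu : ℝ × ℝ → ℝ := fun p => 2 / Real.sqrt (r ^ 2 - 2 * M * r) *
      ((Φm t r p.1 p.2).re * (Φp t r p.1 p.2).re + (Φm t r p.1 p.2).im * (Φp t r p.1 p.2).im) *
      Real.sin p.1 with hGu
  set Hu : ℝ × ℝ → ℝ := fun p => 2 / Real.sqrt (r ^ 2 - 2 * M * r) *
      ((Φm t r p.1 p.2).re * (Φp t r p.1 p.2).im - (Φm t r p.1 p.2).im * (Φp t r p.1 p.2).re)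
      with hHu
  have hGs : ContDiff ℝ (⊤ : ℕ∞) Gu := by
    rw [hGu]
    exact (contDiff_const.mul ((hreQu.mul hrePu).add (himQu.mul himPu))).mul
      (Real.contDiff_sin.comp contDiff_fst)
  have hHs : ContDiff ℝ (⊤ : ℕ∞) Hu := by
    rw [hHu]
    exact contDiff_const.mul ((hreQu.mul himPu).sub (himQu.mul hrePu))
  have hGdiff : Differentiable ℝ Gu := hGs.differentiable (by simp)
  have hHdiff : Differentiable ℝ Hu := hHs.differentiable (by simp)
  have hGc : Continuous (fun p : ℝ × ℝ => fderiv ℝ Gu p ((1 : ℝ), (0 : ℝ))) :=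
    (hGs.continuous_fderiv (by simp)).clm_apply continuous_const
  have hHc : Continuous (fun p : ℝ × ℝ => fderiv ℝ Hu p ((0 : ℝ), (1 : ℝ))) :=
    (hHs.continuous_fderiv (by simp)).clm_apply continuous_const
  have key : ∀ θ φ : ℝ,
      (((1 - 2 * M / r)⁻¹ * deriv (fun t' => ‖Φm t' r θ φ‖ ^ 2) t
          + deriv (fun r' => ‖Φm t r' θ φ‖ ^ 2) r)
        + ((1 - 2 * M / r)⁻¹ * deriv (fun t' => ‖Φp t' r θ φ‖ ^ 2) t
          - deriv (fun r' => ‖Φp t r' θ φ‖ ^ 2) r)) * Real.sin θ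
      = fderiv ℝ Gu (θ, φ) ((1 : ℝ), (0 : ℝ)) + fderiv ℝ Hu (θ, φ) ((0 : ℝ), (1 : ℝ)) := by
    intro θ φ
    by_cases hmem : θ ∈ Set.Icc a b
    · have hθ : θ ∈ Set.Ioo 0 Real.pi := ⟨lt_of_lt_of_le ha hmem.1, lt_of_le_of_lt hmem.2 hbpi⟩
      have hsin : Real.sin θ ≠ 0 := (Real.sin_pos_of_pos_of_lt_pi hθ.1 hθ.2).ne'
      have hQt := slice_t hm t r θ φ
      have hQr := slice_r hm t r θ φ
      have hQθ := slice_θ hm t r θ φ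
      have hQφ := slice_φ hm t r θ φ
      have hPt := slice_t hp t r θ φ
      have hPr := slice_r hp t r θ φ
      have hPθ := slice_θ hp t r θ φ
      have hPφ := slice_φ hp t r θ φ
      rw [(hasDerivAt_normSq_comp hQt).deriv, (hasDerivAt_normSq_comp hQr).deriv,
        (hasDerivAt_normSq_comp hPt).deriv, (hasDerivAt_normSq_comp hPr).deriv]
      have hGval : fderiv ℝ Gu (θ, φ) ((1 : ℝ), (0 : ℝ))
          = 2 / Real.sqrt (r ^ 2 - 2 * M * r) *
              (((deriv (fun x => Φm t r x φ) θ).re * (Φp t r θ φ).re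
                  + (Φm t r θ φ).re * (deriv (fun x => Φp t r x φ) θ).re)
                + ((deriv (fun x => Φm t r x φ) θ).im * (Φp t r θ φ).im
                  + (Φm t r θ φ).im * (deriv (fun x => Φp t r x φ) θ).im)) * Real.sin θ
            + 2 / Real.sqrt (r ^ 2 - 2 * M * r) *
              ((Φm t r θ φ).re * (Φp t r θ φ).re + (Φm t r θ φ).im * (Φp t r θ φ).im) *
              Real.cos θ := by
        refine (hasDerivAt_partial_fst hGdiff θ φ).unique ?_
        have hch := (((hQθ.cre.mul hPθ.cre).add (hQθ.cim.mul hPθ.cim)).const_mul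
          (2 / Real.sqrt (r ^ 2 - 2 * M * r))).mul (Real.hasDerivAt_sin θ)
        rw [hGu]
        convert hch using 1 <;> rfl
      have hHval : fderiv ℝ Hu (θ, φ) ((0 : ℝ), (1 : ℝ))
          = 2 / Real.sqrt (r ^ 2 - 2 * M * r) *
              (((deriv (fun y => Φm t r θ y) φ).re * (Φp t r θ φ).im
                  + (Φm t r θ φ).re * (deriv (fun y => Φp t r θ y) φ).im)
                - ((deriv (fun y => Φm t r θ y) φ).im * (Φp t r θ φ).re
                  + (Φm t r θ φ).im * (deriv (fun y => Φp t r θ y) φ).re)) := by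
        refine (hasDerivAt_partial_snd hHdiff θ φ).unique ?_
        have hch := ((hQφ.cre.mul hPφ.cim).sub (hQφ.cim.mul hPφ.cre)).const_mul
          (2 / Real.sqrt (r ^ 2 - 2 * M * r))
        rw [hHu]
        convert hch using 1 <;> rfl
      rw [hGval, hHval]
      have hE1 := heq1 t r θ φ hr hθ
      have hE2 := heq2 t r θ φ hr hθ
      simp only [edth4', opDeltaV] at hE1
      simp only [edth4, opDeltaY] at hE2
      exact pointwise_alg (Real.sqrt (r ^ 2 - 2 * M * r)) (1 - 2 * M / r) (Real.sin θ)
        (Real.cos θ) (2 / Real.sqrt (r ^ 2 - 2 * M * r)) hsq.ne' hsin rfl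
        _ _ _ _ _ _ _ _ _ _ hE1 hE2
    · have e1 : (fun t' => ‖Φm t' r θ φ‖ ^ 2) = fun _ => (0 : ℝ) :=
        funext fun t' => by rw [(hz t' r θ φ hmem).2]; simp
      have e2 : (fun r' => ‖Φm t r' θ φ‖ ^ 2) = fun _ => (0 : ℝ) :=
        funext fun r' => by rw [(hz t r' θ φ hmem).2]; simp
      have e3 : (fun t' => ‖Φp t' r θ φ‖ ^ 2) = fun _ => (0 : ℝ) :=
        funext fun t' => by rw [(hz t' r θ φ hmem).1]; simp
      have e4 : (fun r' => ‖Φp t r' θ φ‖ ^ 2) = fun _ => (0 : ℝ) :=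
        funext fun r' => by rw [(hz t r' θ φ hmem).1]; simp
      rw [e1, e2, e3, e4]
      have hU : IsOpen {p : ℝ × ℝ | p.1 ∉ Set.Icc a b} :=
        (isClosed_Icc.isOpen_compl).preimage continuous_fst
      have hGev : Gu =ᶠ[nhds ((θ, φ) : ℝ × ℝ)] fun _ => (0 : ℝ) := by
        filter_upwards [hU.mem_nhds hmem] with p hp
        rw [hGu]
        simp [(hz t r p.1 p.2 hp).2]
      have hHev : Hu =ᶠ[nhds ((θ, φ) : ℝ × ℝ)] fun _ => (0 : ℝ) := by
        filter_upwards [hU.mem_nhds hmem] with p hp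
        rw [hHu]
        simp [(hz t r p.1 p.2 hp).2]
      rw [hGev.fderiv_eq, hHev.fderiv_eq]
      simp
  have hHint : ∀ θ : ℝ,
      (∫ φ in (0 : ℝ)..(2 * Real.pi), fderiv ℝ Hu (θ, φ) ((0 : ℝ), (1 : ℝ))) = 0 := by
    intro θ
    rw [intervalIntegral.integral_eq_sub_of_hasDerivAt
      (f := fun φ => Hu (θ, φ)) (fun φ' _ => hasDerivAt_partial_snd hHdiff θ φ')
      ((hHc.comp (continuous_const.prodMk continuous_id)).intervalIntegrable _ _)]
    have hpp := hper_p t r θ 0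
    have hpm := hper_m t r θ 0
    rw [zero_add] at hpp hpm
    rw [hHu]
    simp only [hpp, hpm, sub_self]
  have hGftc : ∀ φ : ℝ,
      (∫ θ' in (0 : ℝ)..Real.pi, fderiv ℝ Gu (θ', φ) ((1 : ℝ), (0 : ℝ))) = 0 := by
    intro φ
    rw [intervalIntegral.integral_eq_sub_of_hasDerivAt
      (f := fun θ' => Gu (θ', φ)) (fun θ' _ => hasDerivAt_partial_fst hGdiff θ' φ)
      ((hGc.comp (continuous_id.prodMk continuous_const)).intervalIntegrable _ _)]
    rw [hGu]
    simp
  refine Eq.trans (intervalIntegral.integral_congr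
    (g := fun θ => ∫ φ in (0 : ℝ)..(2 * Real.pi), fderiv ℝ Gu (θ, φ) ((1 : ℝ), (0 : ℝ)))
    fun θ _ => ?_) ?_
  · rw [← intervalIntegral.integral_mul_const]
    rw [intervalIntegral.integral_congr
      (g := fun φ => fderiv ℝ Gu (θ, φ) ((1 : ℝ), (0 : ℝ))
        + fderiv ℝ Hu (θ, φ) ((0 : ℝ), (1 : ℝ))) (fun φ _ => key θ φ)]
    have hint1 : IntervalIntegrable (fun φ => fderiv ℝ Gu (θ, φ) ((1 : ℝ), (0 : ℝ)))
        MeasureTheory.volume 0 (2 * Real.pi) :=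
      (hGc.comp (continuous_const.prodMk continuous_id)).intervalIntegrable _ _
    have hint2 : IntervalIntegrable (fun φ => fderiv ℝ Hu (θ, φ) ((0 : ℝ), (1 : ℝ)))
        MeasureTheory.volume 0 (2 * Real.pi) :=
      (hHc.comp (continuous_const.prodMk continuous_id)).intervalIntegrable _ _
    rw [intervalIntegral.integral_add hint1 hint2, hHint θ, add_zero]
  · rw [swap_cont (f := fun θ' φ' => fderiv ℝ Gu (θ', φ') ((1 : ℝ), (0 : ℝ))) hGc hπ.le h2π]
    rw [intervalIntegral.integral_congr (g := fun _ => (0 : ℝ)) (fun φ _ => hGftc φ)]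
    simp
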